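/- arXiv:1310.8378 — 2 statements merged into one kernel-verified Lean document; each statement's English description precedes it below -/
import Mathlib

section
/- For every permutation π and every positive integer n, T_n(π) ≤ 15^{ex(n,π)}. -/
open Filter

/-- A binary matrix `A` contains a binary matrix `P` (as a submatrix pattern):
there are strictly increasing choices of rows and columns such that `A` has a
one wherever `P` does. -/
def ContainsMat {k l m n : ℕ} (P : Fin k → Fin l → Bool) (A : Fin m → Fin n → Bool) : Prop :=
  ∃ (r : Fin k → Fin m) (c : Fin l → Fin n), StrictMono r ∧ StrictMono c ∧
    ∀ i j, P i j = true → A (r i) (c j) = true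

/-- The permutation matrix of a permutation of `{1,…,k}`. -/
def permMatrix {k : ℕ} (π : Equiv.Perm (Fin k)) : Fin k → Fin k → Bool :=
  fun i j => decide (π i = j)

/-- The mass of a binary matrix: the number of its one-entries. -/
def mass {m n : ℕ} (A : Fin m → Fin n → Bool) : ℕ :=
  (Finset.univ.filter fun p : Fin m × Fin n => A p.1 p.2 = true).card

/-- A binary matrix avoids a permutation if it avoids its permutation matrix. -/
def AvoidsPerm {k m n : ℕ} (A : Fin m → Fin n → Bool) (π : Equiv.Perm (Fin k)) : Prop :=
  ¬ ContainsMat (permMatrix π) A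

/-- `ex n π`: the maximum mass of an `n × n` binary matrix avoiding `π`. -/
noncomputable def exP {k : ℕ} (n : ℕ) (π : Equiv.Perm (Fin k)) : ℕ :=
  sSup {m | ∃ A : Fin n → Fin n → Bool, AvoidsPerm A π ∧ mass A = m}

/-- `ex n U` for a set `U` of permutations: the maximum mass of an `n × n`
binary matrix avoiding every permutation in `U`. -/
noncomputable def exU {k : ℕ} (n : ℕ) (U : Finset (Equiv.Perm (Fin k))) : ℕ :=
  sSup {m | ∃ A : Fin n → Fin n → Bool, (∀ π ∈ U, AvoidsPerm A π) ∧ mass A = m}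

/-- An `n`-permutation `σ` contains a `k`-permutation `π`. -/
def PermContains {n k : ℕ} (σ : Equiv.Perm (Fin n)) (π : Equiv.Perm (Fin k)) : Prop :=
  ∃ x : Fin k → Fin n, StrictMono x ∧ ∀ i j, σ (x i) < σ (x j) ↔ π i < π j

/-- `S n π`: the number of `n`-permutations avoiding `π`. -/
noncomputable def SP {k : ℕ} (n : ℕ) (π : Equiv.Perm (Fin k)) : ℕ :=
  Nat.card {σ : Equiv.Perm (Fin n) // ¬ PermContains σ π}

/-- `S n U`: the number of `n`-permutations avoiding every permutation in `U`. -/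
noncomputable def SU {k : ℕ} (n : ℕ) (U : Finset (Equiv.Perm (Fin k))) : ℕ :=
  Nat.card {σ : Equiv.Perm (Fin n) // ∀ π ∈ U, ¬ PermContains σ π}

/-- `T n π`: the number of `n × n` binary matrices avoiding `π`. -/
noncomputable def TP {k : ℕ} (n : ℕ) (π : Equiv.Perm (Fin k)) : ℕ :=
  Nat.card {A : Fin n → Fin n → Bool // AvoidsPerm A π}

/-- `P` is an interval minor of `A`: there are ordered disjoint row intervals
`[rlo a, rhi a]` and column intervals `[clo b, chi b]` such that wherever `P`
has a one, the corresponding block of `A` contains a one. -/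
def IntervalMinor {k l m n : ℕ} (P : Fin k → Fin l → Bool) (A : Fin m → Fin n → Bool) : Prop :=
  ∃ (rlo rhi : Fin k → Fin m) (clo chi : Fin l → Fin n),
    (∀ a, rlo a ≤ rhi a) ∧ (∀ a b, a < b → rhi a < rlo b) ∧
    (∀ a, clo a ≤ chi a) ∧ (∀ a b, a < b → chi a < clo b) ∧
    ∀ a b, P a b = true → ∃ i j, rlo a ≤ i ∧ i ≤ rhi a ∧ clo b ≤ j ∧ j ≤ chi b ∧ A i j = true

/-- The all-ones `k × l` binary matrix. -/
def J (k l : ℕ) : Fin k → Fin l → Bool := fun _ _ => true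

/-- `m n P`: the maximum mass of an `n × n` binary matrix avoiding `P` as an
interval minor. -/
noncomputable def mP {k l : ℕ} (n : ℕ) (P : Fin k → Fin l → Bool) : ℕ :=
  sSup {m | ∃ A : Fin n → Fin n → Bool, ¬ IntervalMinor P A ∧ mass A = m}

/-- `f_P(t,s)`: the supremum (in `ℕ∞`) of those `N` for which there is an
`N × t` binary matrix with at least `s` ones in each row avoiding `P` as an
interval minor. -/
noncomputable def fP {k l : ℕ} (P : Fin k → Fin l → Bool) (t s : ℕ) : ℕ∞ :=
  sSup {x : ℕ∞ | ∃ N : ℕ, x = (N : ℕ∞) ∧ ∃ A : Fin N → Fin t → Bool,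
    (∀ i, s ≤ (Finset.univ.filter fun j => A i j = true).card) ∧ ¬ IntervalMinor P A}

/-- `g_P(t,s)`: the supremum (in `ℕ∞`) of those `N` for which there is a
`t × N` binary matrix with at least `s` ones in each column avoiding `P` as an
interval minor. -/
noncomputable def gP {k l : ℕ} (P : Fin k → Fin l → Bool) (t s : ℕ) : ℕ∞ :=
  sSup {x : ℕ∞ | ∃ N : ℕ, x = (N : ℕ∞) ∧ ∃ A : Fin t → Fin N → Bool,
    (∀ j, s ≤ (Finset.univ.filter fun i => A i j = true).card) ∧ ¬ IntervalMinor P A}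

/-!
Up to reversing the columns, which changes neither side, `π` is sum-indecomposable, and then
two `π`-avoiding matrices placed along the diagonal still avoid `π`; so
`ex(⌈n/2⌉, π) + mass B ≤ ex(n, π)` for every avoiding `⌈n/2⌉ × ⌈n/2⌉` matrix `B`.
Contracting an `n × n` matrix by merging consecutive pairs of rows and of columns preserves
avoidance, and `B` has at most `15 ^ mass B` preimages: one nonempty pattern in each `2 × 2`
block lying over a one of `B`. Summing over `B` gives
`15 ^ ex(⌈n/2⌉, π) * T_n(π) ≤ T_⌈n/2⌉(π) * 15 ^ ex(n, π)`, and induction on `n` finishes.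
-/

open Finset

section Patterns

variable {k m n m' n' : ℕ}

lemma containsMat_permMatrix_iff {π : Equiv.Perm (Fin k)} {A : Fin m → Fin n → Bool} :
    ContainsMat (permMatrix π) A ↔
      ∃ (r : Fin k → Fin m) (c : Fin k → Fin n), StrictMono r ∧ StrictMono c ∧
        ∀ i, A (r i) (c (π i)) = true := by
  simp only [ContainsMat, permMatrix, decide_eq_true_eq]
  refine exists₂_congr fun r c => and_congr_right' <| and_congr_right' ?_
  exact ⟨fun h i => h i _ rfl, fun h i j hij => hij ▸ h i⟩

lemma AvoidsPerm.mono {π : Equiv.Perm (Fin k)} {A B : Fin m → Fin n → Bool}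
    (hA : AvoidsPerm A π) (h : ∀ i j, B i j = true → A i j = true) : AvoidsPerm B π :=
  fun ⟨r, c, hr, hc, hB⟩ => hA ⟨r, c, hr, hc, fun i j hij => h _ _ (hB i j hij)⟩

def oneEntries (A : Fin m → Fin n → Bool) : Finset (Fin m × Fin n) :=
  univ.filter fun p => A p.1 p.2 = true

@[simp]
lemma mem_oneEntries {A : Fin m → Fin n → Bool} {p : Fin m × Fin n} :
    p ∈ oneEntries A ↔ A p.1 p.2 = true := by
  simp [oneEntries]

lemma mass_eq_card_oneEntries (A : Fin m → Fin n → Bool) : mass A = #(oneEntries A) := rfl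

lemma oneEntries_injective : Function.Injective (oneEntries (m := m) (n := n)) := by
  intro A A' h
  funext i j
  have := Finset.ext_iff.mp h (i, j)
  simp only [mem_oneEntries] at this
  exact Bool.eq_iff_iff.mpr this

lemma mass_sup_of_disjoint {X Y : Fin m → Fin n → Bool}
    (h : ∀ i j, X i j = true → Y i j = false) : mass (X ⊔ Y) = mass X + mass Y := by
  have hunion : oneEntries (X ⊔ Y) = oneEntries X ∪ oneEntries Y := by
    ext p; simp
  simp only [mass_eq_card_oneEntries, hunion]
  refine card_union_of_disjoint (disjoint_left.mpr fun p hX hY => ?_)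
  simp only [mem_oneEntries] at hX hY
  simp [h _ _ hX] at hY

def imageMat (f : Fin m → Fin m') (g : Fin n → Fin n') (A : Fin m → Fin n → Bool) :
    Fin m' → Fin n' → Bool :=
  fun i j => decide (∃ a b, f a = i ∧ g b = j ∧ A a b = true)

lemma oneEntries_imageMat (f : Fin m → Fin m') (g : Fin n → Fin n') (A : Fin m → Fin n → Bool) :
    oneEntries (imageMat f g A) = (oneEntries A).image (Prod.map f g) := by
  ext ⟨i, j⟩
  simp [imageMat]
  tauto

lemma mass_imageMat {f : Fin m → Fin m'} {g : Fin n → Fin n'} (hf : Function.Injective f)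
    (hg : Function.Injective g) (A : Fin m → Fin n → Bool) :
    mass (imageMat f g A) = mass A := by
  rw [mass_eq_card_oneEntries, oneEntries_imageMat, card_image_of_injective _ (hf.prodMap hg)]
  rfl

/-- A copy in the image lifts to a copy in `A`: monotone maps reflect strict inequalities. -/
lemma AvoidsPerm.imageMat {π : Equiv.Perm (Fin k)} {A : Fin m → Fin n → Bool}
    (hA : AvoidsPerm A π) {f : Fin m → Fin m'} {g : Fin n → Fin n'} (hf : Monotone f)
    (hg : Monotone g) : AvoidsPerm (imageMat f g A) π := by
  rw [AvoidsPerm, containsMat_permMatrix_iff] at hA ⊢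
  rintro ⟨r, c, hr, hc, hone⟩
  simp only [_root_.imageMat, decide_eq_true_eq] at hone
  choose a b hfa hgb hab using hone
  refine hA ⟨a, fun j => b (π.symm j), fun i i' h => hf.reflect_lt ?_,
    fun j j' h => hg.reflect_lt ?_, fun i => by simpa using hab i⟩
  · rw [hfa, hfa]; exact hr h
  · simpa [hgb] using hc h

end Patterns

section SumIndecomposable

variable {k m n : ℕ}

/-- `π` is not a direct sum `σ ⊕ τ` of two nonempty permutations. -/
def IsSumIndecomposable (π : Equiv.Perm (Fin k)) : Prop :=
  ∀ S : Set (Fin k), (∀ i ∈ S, ∀ j ∉ S, i < j ∧ π i < π j) → S = ∅ ∨ S = Set.univ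

lemma apply_first_lt_apply_last_of_sum_split {π : Equiv.Perm (Fin k)} {S : Set (Fin k)}
    (hS : ∀ i ∈ S, ∀ j ∉ S, i < j ∧ π i < π j) (hne : S.Nonempty) (hnu : S ≠ Set.univ) :
    ∃ h : 0 < k, π ⟨0, h⟩ < π ⟨k - 1, by omega⟩ := by
  obtain ⟨x, hx⟩ := hne
  obtain ⟨y, hy⟩ := (Set.ne_univ_iff_exists_notMem S).mp hnu
  have hk : 0 < k := x.pos
  have hfirst : (⟨0, hk⟩ : Fin k) ∈ S := by
    by_contra h
    exact absurd (hS x hx _ h).1 (by simp [Fin.lt_def])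
  have hlast : (⟨k - 1, by omega⟩ : Fin k) ∉ S := fun h =>
    absurd (hS _ h y hy).1 (by simp only [Fin.lt_def]; omega)
  exact ⟨hk, (hS _ hfirst _ hlast).2⟩

/-- A split of `π` puts its first index below its last one; a split of the reversal
`i ↦ rev (π i)` puts it above. -/
lemma isSumIndecomposable_or_trans_revPerm (π : Equiv.Perm (Fin k)) :
    IsSumIndecomposable π ∨ IsSumIndecomposable (π.trans Fin.revPerm) := by
  unfold IsSumIndecomposable
  by_contra! h
  obtain ⟨⟨S, hS, hS0, hSu⟩, ⟨T, hT, hT0, hTu⟩⟩ := h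
  obtain ⟨hk, hlt⟩ := apply_first_lt_apply_last_of_sum_split hS hS0 hSu
  obtain ⟨_, hlt'⟩ := apply_first_lt_apply_last_of_sum_split hT hT0 hTu
  simp only [Equiv.trans_apply, Fin.revPerm_apply, Fin.rev_lt_rev] at hlt'
  exact lt_asymm hlt hlt'

lemma lt_of_le_of_le_of_strictMono {f : Fin k → Fin n} (hf : StrictMono f) {x y : Fin k}
    (hxy : x ≠ y) {p : ℕ} (hx : (f x : ℕ) ≤ p) (hy : p ≤ f y) : x < y :=
  hf.lt_iff_lt.mp <| lt_of_le_of_ne (Fin.le_def.mpr (hx.trans hy)) (hf.injective.ne hxy)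

/-- A copy of `π` in `X ⊔ Y` splits `π` into the entries it takes from `X` and those it takes
from `Y`. -/
lemma AvoidsPerm.sup {π : Equiv.Perm (Fin k)} (hπ : IsSumIndecomposable π)
    {X Y : Fin m → Fin n → Bool} (hXa : AvoidsPerm X π) (hYa : AvoidsPerm Y π) {p q : ℕ}
    (hX : ∀ i j, X i j = true → (i : ℕ) ≤ p ∧ (j : ℕ) ≤ q)
    (hY : ∀ i j, Y i j = true → p ≤ (i : ℕ) ∧ q ≤ (j : ℕ)) : AvoidsPerm (X ⊔ Y) π := by
  rw [AvoidsPerm, containsMat_permMatrix_iff] at hXa hYa ⊢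
  rintro ⟨r, c, hr, hc, hone⟩
  have hY' : ∀ i, X (r i) (c (π i)) ≠ true → Y (r i) (c (π i)) = true := fun i hi => by
    simpa [hi] using hone i
  set S : Set (Fin k) := {i | X (r i) (c (π i)) = true}
  have hsplit : ∀ i ∈ S, ∀ j ∉ S, i < j ∧ π i < π j := fun i hi j hj => by
    have hij : i ≠ j := fun h => hj (h ▸ hi)
    obtain ⟨hri, hci⟩ := hX _ _ hi
    obtain ⟨hrj, hcj⟩ := hY _ _ (hY' j hj)
    exact ⟨lt_of_le_of_le_of_strictMono hr hij hri hrj,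
      lt_of_le_of_le_of_strictMono hc (π.injective.ne hij) hci hcj⟩
  rcases hπ S hsplit with hS | hS
  · exact hYa ⟨r, c, hr, hc, fun i => hY' i (Set.eq_empty_iff_forall_notMem.mp hS i)⟩
  · exact hXa ⟨r, c, hr, hc, fun i => Set.eq_univ_iff_forall.mp hS i⟩

end SumIndecomposable

section Reversal

variable {k l m n : ℕ}

def reverseCols (A : Fin m → Fin n → Bool) : Fin m → Fin n → Bool := fun i j => A i j.rev

lemma reverseCols_involutive : Function.Involutive (reverseCols (m := m) (n := n)) := by
  intro A; funext i j; simp [reverseCols]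

lemma ContainsMat.reverseCols {P : Fin k → Fin l → Bool} {A : Fin m → Fin n → Bool}
    (h : ContainsMat P A) : ContainsMat (_root_.reverseCols P) (_root_.reverseCols A) := by
  obtain ⟨r, c, hr, hc, hP⟩ := h
  refine ⟨r, fun j => (c j.rev).rev, hr, fun j j' h => ?_, fun i j hij => by
    simpa [_root_.reverseCols] using hP i j.rev hij⟩
  exact Fin.rev_lt_rev.mpr (hc (Fin.rev_lt_rev.mpr h))

lemma permMatrix_trans_revPerm (π : Equiv.Perm (Fin k)) :
    permMatrix (π.trans Fin.revPerm) = reverseCols (permMatrix π) := by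
  funext i j
  simp [permMatrix, reverseCols, Fin.rev_eq_iff, eq_comm]

lemma avoidsPerm_reverseCols_iff {π : Equiv.Perm (Fin k)} {A : Fin m → Fin n → Bool} :
    AvoidsPerm (reverseCols A) (π.trans Fin.revPerm) ↔ AvoidsPerm A π := by
  rw [AvoidsPerm, AvoidsPerm, permMatrix_trans_revPerm, not_iff_not]
  refine ⟨fun h => ?_, ContainsMat.reverseCols⟩
  simpa only [reverseCols_involutive _] using h.reverseCols

lemma mass_reverseCols (A : Fin m → Fin n → Bool) : mass (reverseCols A) = mass A := by
  rw [mass_eq_card_oneEntries, mass_eq_card_oneEntries]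
  exact card_equiv ((Equiv.refl _).prodCongr Fin.revPerm) fun p => by simp [reverseCols]

lemma TP_trans_revPerm (π : Equiv.Perm (Fin k)) : TP n (π.trans Fin.revPerm) = TP n π :=
  Nat.card_congr <| (reverseCols_involutive.toPerm _).subtypeEquiv fun A => by
    rw [Function.Involutive.coe_toPerm, ← avoidsPerm_reverseCols_iff (A := reverseCols A),
      reverseCols_involutive A]

lemma exP_trans_revPerm (π : Equiv.Perm (Fin k)) : exP n (π.trans Fin.revPerm) = exP n π := by
  refine congrArg sSup (Set.ext fun x => ⟨?_, ?_⟩)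
  · rintro ⟨A, hA, rfl⟩
    exact ⟨reverseCols A, by rwa [← avoidsPerm_reverseCols_iff, reverseCols_involutive],
      mass_reverseCols A⟩
  · rintro ⟨A, hA, rfl⟩
    exact ⟨reverseCols A, avoidsPerm_reverseCols_iff.mpr hA, mass_reverseCols A⟩

end Reversal

section Counting

/-- A set with image `U` is determined by its nonempty traces on the fibres over `U`. -/
lemma card_filter_image_eq_le {α β : Type*} [Fintype α] [DecidableEq α] [DecidableEq β]
    (φ : α → β) (U : Finset β) :
    #{T : Finset α | T.image φ = U} ≤ ∏ u ∈ U, (2 ^ #{x | φ x = u} - 1) := by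
  have mem_of_traces_eq : ∀ {T T' : Finset α}, T.image φ = U →
      (∀ u ∈ U, T.filter (φ · = u) = T'.filter (φ · = u)) → ∀ x ∈ T, x ∈ T' := by
    intro T T' hT h x hx
    have hx' : x ∈ T.filter (φ · = φ x) := mem_filter.mpr ⟨hx, rfl⟩
    rw [h _ (hT ▸ mem_image_of_mem φ hx)] at hx'
    exact (mem_filter.mp hx').1
  calc #{T : Finset α | T.image φ = U}
      ≤ #(U.pi fun u => (univ.filter (φ · = u)).powerset.erase ∅) := by
        refine card_le_card_of_injOn (fun T u _ => T.filter (φ · = u)) ?_ ?_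
        · intro T hT
          simp only [mem_coe, mem_filter, mem_univ, true_and] at hT
          simp only [mem_coe, Finset.mem_pi, mem_erase, mem_powerset]
          intro u hu
          obtain ⟨x, hx, rfl⟩ := mem_image.mp (hT ▸ hu)
          exact ⟨ne_empty_of_mem (mem_filter.mpr ⟨hx, rfl⟩),
            fun y hy => by simp [(mem_filter.mp hy).2]⟩
        · intro T hT T' hT' h
          simp only [mem_coe, mem_filter, mem_univ, true_and] at hT hT'
          have h' : ∀ u ∈ U, T.filter (φ · = u) = T'.filter (φ · = u) :=
            fun u hu => congrFun (congrFun h u) hu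
          exact Finset.ext fun x => ⟨mem_of_traces_eq hT h' x,
            mem_of_traces_eq hT' (fun u hu => (h' u hu).symm) x⟩
    _ = ∏ u ∈ U, (2 ^ #{x | φ x = u} - 1) := by
        rw [card_pi]
        exact prod_congr rfl fun u _ => by
          rw [card_erase_of_mem (empty_mem_powerset _), card_powerset]

variable {m n m' n' : ℕ}

lemma card_imageMat_eq_le (f : Fin m → Fin m') (g : Fin n → Fin n')
    (B : Fin m' → Fin n' → Bool) :
    #{A | imageMat f g A = B} ≤
      ∏ p ∈ oneEntries B, (2 ^ (#{i | f i = p.1} * #{j | g j = p.2}) - 1) := by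
  calc #{A | imageMat f g A = B}
      ≤ #{T : Finset (Fin m × Fin n) | T.image (Prod.map f g) = oneEntries B} := by
        refine card_le_card_of_injOn oneEntries (fun A hA => ?_) oneEntries_injective.injOn
        simp only [mem_coe, mem_filter, mem_univ, true_and] at hA ⊢
        rw [← hA, oneEntries_imageMat]
    _ ≤ _ := card_filter_image_eq_le _ _
    _ = _ := prod_congr rfl fun p _ => by
        rw [← card_product, ← filter_product, univ_product_univ]
        simp [Prod.ext_iff]

end Counting

section Extremal

variable {k n : ℕ} {π : Equiv.Perm (Fin k)}

lemma mass_le_mul {m : ℕ} (A : Fin m → Fin n → Bool) : mass A ≤ m * n :=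
  (card_filter_le _ _).trans_eq (by simp)

lemma bddAbove_avoidsPerm_masses :
    BddAbove {x | ∃ A : Fin n → Fin n → Bool, AvoidsPerm A π ∧ mass A = x} :=
  ⟨n * n, by rintro _ ⟨A, -, rfl⟩; exact mass_le_mul A⟩

lemma AvoidsPerm.mass_le_exP {A : Fin n → Fin n → Bool} (hA : AvoidsPerm A π) :
    mass A ≤ exP n π :=
  le_csSup bddAbove_avoidsPerm_masses ⟨A, hA, rfl⟩

lemma AvoidsPerm.exists_mass_eq_exP {A : Fin n → Fin n → Bool} (hA : AvoidsPerm A π) :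
    ∃ A' : Fin n → Fin n → Bool, AvoidsPerm A' π ∧ mass A' = exP n π :=
  Nat.sSup_mem (by exact ⟨_, A, hA, rfl⟩) bddAbove_avoidsPerm_masses

open Classical in
lemma TP_eq_card : TP n π = #{A : Fin n → Fin n → Bool | AvoidsPerm A π} := by
  rw [TP, Nat.card_eq_fintype_card, Fintype.card_subtype]

lemma eq_of_mass_eq (hn : n ≤ 1) {A A' : Fin n → Fin n → Bool} (h : mass A = mass A') :
    A = A' := by
  have : Subsingleton (Fin n) := Fin.subsingleton_iff_le_one.mpr hn
  refine oneEntries_injective ?_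
  rcases (oneEntries A).eq_empty_or_nonempty with hA | ⟨p, hp⟩
  · rw [hA, eq_comm, ← card_eq_zero, ← mass_eq_card_oneEntries, ← h, mass_eq_card_oneEntries,
      hA, card_empty]
  · obtain ⟨p', hp'⟩ : (oneEntries A').Nonempty := by
      rw [← card_pos, ← mass_eq_card_oneEntries, ← h, mass_eq_card_oneEntries, card_pos]
      exact ⟨p, hp⟩
    rw [eq_univ_of_forall (s := oneEntries A) fun q => Subsingleton.elim p q ▸ hp,
      eq_univ_of_forall (s := oneEntries A') fun q => Subsingleton.elim p' q ▸ hp']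

open Classical in
lemma TP_le_exP_add_one (hn : n ≤ 1) : TP n π ≤ exP n π + 1 := by
  rw [TP_eq_card, ← card_range (exP n π + 1)]
  refine card_le_card_of_injOn mass (fun A hA => ?_) fun A _ A' _ => eq_of_mass_eq hn
  simp only [mem_coe, mem_filter, mem_univ, true_and, mem_range] at hA ⊢
  exact Nat.lt_succ_of_le hA.mass_le_exP

end Extremal

section Halving

variable {k n : ℕ} {π : Equiv.Perm (Fin k)}

/-- Merges consecutive indices in pairs; for odd `n` the index `0` forms a block of its own. -/
def halve (n : ℕ) : Fin n → Fin ((n + 1) / 2) := fun i => ⟨(i + n % 2) / 2, by omega⟩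

lemma halve_monotone : Monotone (halve n) := fun _ _ h =>
  Fin.mk_le_mk.mpr (Nat.div_le_div_right (Nat.add_le_add_right h _))

lemma card_halve_preimage_le_two (a : Fin ((n + 1) / 2)) : #{i | halve n i = a} ≤ 2 := by
  refine (card_le_card_of_injOn (s := {i | halve n i = a}) (t := range 2)
    (fun i => ((i : ℕ) + n % 2) % 2)
    (fun i _ => by simp; omega) fun i hi j hj h => ?_).trans_eq (card_range 2)
  simp only [mem_coe, mem_filter, mem_univ, true_and, halve, Fin.ext_iff] at hi hj h
  ext; omega

lemma card_halve_preimage_le_one (hn : n % 2 = 1) {a : Fin ((n + 1) / 2)} (ha : (a : ℕ) = 0) :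
    #{i | halve n i = a} ≤ 1 :=
  card_le_one.mpr fun i hi j hj => by
    simp only [mem_filter, mem_univ, true_and, halve, Fin.ext_iff] at hi hj
    ext; omega

def lowerHalf (n : ℕ) : Fin ((n + 1) / 2) → Fin n := Fin.castLE (by omega)

lemma lowerHalf_strictMono : StrictMono (lowerHalf n) := Fin.strictMono_castLE _

def upperHalf (n : ℕ) : Fin ((n + 1) / 2) → Fin n := fun a => ⟨a + n / 2, by omega⟩

lemma upperHalf_strictMono : StrictMono (upperHalf n) := fun a b h => by
  simp only [upperHalf, Fin.lt_def] at h ⊢; omega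

/-- For odd `n` the cell `(0, 0)` is a single cell under `halve n`, and it is where the two
diagonal blocks of the gluing in `exP_add_mass_le` overlap. -/
def clearOriginIfOdd (n : ℕ) {m : ℕ} (B : Fin m → Fin m → Bool) : Fin m → Fin m → Bool :=
  fun a b => if n % 2 = 1 ∧ (a : ℕ) = 0 ∧ (b : ℕ) = 0 then false else B a b

lemma clearOriginIfOdd_le {m : ℕ} {B : Fin m → Fin m → Bool} {a b : Fin m}
    (h : clearOriginIfOdd n B a b = true) : B a b = true := by
  unfold clearOriginIfOdd at h; split_ifs at h; exact h

lemma card_imageMat_halve_eq_le (B : Fin ((n + 1) / 2) → Fin ((n + 1) / 2) → Bool) :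
    #{A | imageMat (halve n) (halve n) A = B} ≤ 15 ^ mass (clearOriginIfOdd n B) := by
  set c : Fin ((n + 1) / 2) × Fin ((n + 1) / 2) → ℕ :=
    fun p => 2 ^ (#{i | halve n i = p.1} * #{j | halve n j = p.2}) - 1
  have hsub : oneEntries (clearOriginIfOdd n B) ⊆ oneEntries B := fun p hp => by
    simpa using clearOriginIfOdd_le (mem_oneEntries.mp hp)
  have hc : ∀ p, c p ≤ 15 := fun p =>
    Nat.sub_le_sub_right (Nat.pow_le_pow_right two_pos (Nat.mul_le_mul
      (card_halve_preimage_le_two p.1) (card_halve_preimage_le_two p.2))) 1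
  have hc_origin : ∀ p ∈ oneEntries B \ oneEntries (clearOriginIfOdd n B), c p ≤ 1 := by
    intro p hp
    simp only [Finset.mem_sdiff, mem_oneEntries, clearOriginIfOdd] at hp
    obtain ⟨hB, hclear⟩ := hp
    split_ifs at hclear with h
    · exact Nat.sub_le_sub_right (Nat.pow_le_pow_right two_pos (Nat.mul_le_mul
        (card_halve_preimage_le_one h.1 h.2.1) (card_halve_preimage_le_one h.1 h.2.2))) 1
    · exact absurd hB hclear
  calc #{A | imageMat (halve n) (halve n) A = B}
      ≤ ∏ p ∈ oneEntries B, c p := card_imageMat_eq_le _ _ B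
    _ = (∏ p ∈ oneEntries B \ oneEntries (clearOriginIfOdd n B), c p) *
          ∏ p ∈ oneEntries (clearOriginIfOdd n B), c p := (prod_sdiff hsub).symm
    _ ≤ 1 * 15 ^ mass (clearOriginIfOdd n B) :=
        Nat.mul_le_mul (prod_le_one' hc_origin) (prod_le_pow_card _ _ _ fun p _ => hc p)
    _ = 15 ^ mass (clearOriginIfOdd n B) := one_mul _

/-- Glue a matrix of maximal mass and `B` along the diagonal. -/
lemma exP_add_mass_le (hπ : IsSumIndecomposable π)
    {B : Fin ((n + 1) / 2) → Fin ((n + 1) / 2) → Bool} (hB : AvoidsPerm B π) :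
    exP ((n + 1) / 2) π + mass (clearOriginIfOdd n B) ≤ exP n π := by
  obtain ⟨A, hA, hA_mass⟩ := hB.exists_mass_eq_exP
  have hlow := lowerHalf_strictMono (n := n)
  have hupp := upperHalf_strictMono (n := n)
  set X := imageMat (lowerHalf n) (lowerHalf n) A
  set Y := imageMat (upperHalf n) (upperHalf n) (clearOriginIfOdd n B)
  have hX : ∀ i j, X i j = true → (i : ℕ) ≤ n / 2 ∧ (j : ℕ) ≤ n / 2 := by
    intro i j h
    obtain ⟨a, b, rfl, rfl, -⟩ := of_decide_eq_true h
    simp only [lowerHalf, Fin.val_castLE]; omega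
  have hY : ∀ i j, Y i j = true → n / 2 ≤ (i : ℕ) ∧ n / 2 ≤ (j : ℕ) := by
    intro i j h
    obtain ⟨a, b, rfl, rfl, -⟩ := of_decide_eq_true h
    simp only [upperHalf]; omega
  have hXY : ∀ i j, X i j = true → Y i j = false := by
    intro i j hx
    by_contra hy
    obtain ⟨a, b, rfl, rfl, -⟩ := of_decide_eq_true hx
    obtain ⟨a', b', ha, hb, hB'⟩ := of_decide_eq_true (Bool.not_eq_false _ ▸ hy)
    simp only [lowerHalf, upperHalf, Fin.ext_iff, Fin.val_castLE] at ha hb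
    simp only [clearOriginIfOdd] at hB'
    split_ifs at hB' with h
    exact h ⟨by omega, by omega, by omega⟩
  calc exP ((n + 1) / 2) π + mass (clearOriginIfOdd n B) = mass (X ⊔ Y) := by
        rw [mass_sup_of_disjoint hXY, mass_imageMat hlow.injective hlow.injective,
          mass_imageMat hupp.injective hupp.injective, hA_mass]
    _ ≤ exP n π := AvoidsPerm.mass_le_exP <|
        (hA.imageMat hlow.monotone hlow.monotone).sup hπ
          ((hB.mono fun _ _ => clearOriginIfOdd_le).imageMat hupp.monotone hupp.monotone) hX hY

/-- Contract each avoiding `n × n` matrix to its image under `halve n`, which avoids `π`, and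
count the fibres. -/
lemma pow_exP_mul_TP_le (hπ : IsSumIndecomposable π) (n : ℕ) :
    15 ^ exP ((n + 1) / 2) π * TP n π ≤ TP ((n + 1) / 2) π * 15 ^ exP n π := by
  classical
  have hmaps : Set.MapsTo (imageMat (halve n) (halve n))
      ↑({A | AvoidsPerm A π} : Finset (Fin n → Fin n → Bool))
      ↑({B | AvoidsPerm B π} : Finset (Fin ((n + 1) / 2) → Fin ((n + 1) / 2) → Bool)) := by
    intro A hA
    simp only [mem_coe, mem_filter, mem_univ, true_and] at hA ⊢
    exact hA.imageMat halve_monotone halve_monotone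
  rw [TP_eq_card, TP_eq_card, card_eq_sum_card_fiberwise hmaps, mul_sum, ← smul_eq_mul,
    ← sum_const]
  refine sum_le_sum fun B hB => ?_
  calc 15 ^ exP ((n + 1) / 2) π * #{A ∈ {A | AvoidsPerm A π} | imageMat (halve n) (halve n) A = B}
      ≤ 15 ^ exP ((n + 1) / 2) π * 15 ^ mass (clearOriginIfOdd n B) :=
        Nat.mul_le_mul_left _ <| (card_le_card (filter_subset_filter _ (filter_subset _ _))).trans
          (card_imageMat_halve_eq_le B)
    _ ≤ 15 ^ exP n π := by
        rw [← pow_add]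
        exact Nat.pow_le_pow_right (by norm_num) (exP_add_mass_le hπ (by simpa using hB))

lemma TP_le_pow_exP (hπ : IsSumIndecomposable π) (n : ℕ) : TP n π ≤ 15 ^ exP n π := by
  induction n using Nat.strong_induction_on with
  | _ n ih =>
    rcases le_or_gt n 1 with hn | hn
    · exact (TP_le_exP_add_one hn).trans (Nat.lt_pow_self (by norm_num))
    · refine le_of_mul_le_mul_left ?_ (pow_pos (by norm_num : 0 < 15) (exP ((n + 1) / 2) π))
      calc 15 ^ exP ((n + 1) / 2) π * TP n π ≤ TP ((n + 1) / 2) π * 15 ^ exP n π :=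
            pow_exP_mul_TP_le hπ n
        _ ≤ 15 ^ exP ((n + 1) / 2) π * 15 ^ exP n π := Nat.mul_le_mul_right _ (ih _ (by omega))

end Halving

theorem stmt12_general {k : ℕ} (π : Equiv.Perm (Fin k)) (n : ℕ) :
    TP n π ≤ 15 ^ exP n π := by
  rcases isSumIndecomposable_or_trans_revPerm π with h | h
  · exact TP_le_pow_exP h n
  · rw [← TP_trans_revPerm, ← exP_trans_revPerm]
    exact TP_le_pow_exP h n

/-- For every permutation `π` and every positive integer `n`,
`T_n(π) ≤ 15^{ex(n,π)}`. -/
theorem stmt12 {k : ℕ} (π : Equiv.Perm (Fin k)) (n : ℕ) (hn : 0 < n) :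
    TP n π ≤ 15 ^ exP n π :=
  stmt12_general π n
end

section
/- For every binary matrix P and all positive integers n, s, t with s ≤ t, the inequality m(tn,P) ≤ m(s−1,P)·m(n,P) + m(t,P)·f_P(t,s)·n + m(t,P)·g_P(t,s)·n holds (as an inequality of extended natural numbers, with m(0,P) := 0). -/
open Filter

/-!
Cut an avoiding `tn × tn` matrix into `n²` blocks of size `t × t`; each block avoids `P`.
A block with at least `s` nonzero columns ("wide") or rows ("tall") has mass at most `m(t,P)`;
otherwise its nonzero rows and columns fit in an `(s-1) × (s-1)` submatrix, so its mass is at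
most `m(s-1,P)`. Contracting each block row of a block column to a single row turns the wide
blocks of that column into the rows of a matrix counted by `f_P(t,s)`, so there are at most
`f_P(t,s)·n` wide blocks, and symmetrically at most `g_P(t,s)·n` tall ones. Contracting every
block to a single entry gives an `n × n` avoiding matrix, so at most `m(n,P)` blocks are nonzero.
-/

open Function

section IntervalMinor

variable {k l m n p q : ℕ}

lemma strictMono_of_intervals {lo hi : Fin k → Fin m} (hle : ∀ a, lo a ≤ hi a)
    (hlt : ∀ a b, a < b → hi a < lo b) : StrictMono lo ∧ StrictMono hi :=
  ⟨fun a b hab => (hle a).trans_lt (hlt a b hab), fun a b hab => (hlt a b hab).trans_le (hle b)⟩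

theorem IntervalMinor.trans {P : Fin k → Fin l → Bool} {C : Fin p → Fin q → Bool}
    {A : Fin m → Fin n → Bool} (hPC : IntervalMinor P C) (hCA : IntervalMinor C A) :
    IntervalMinor P A := by
  obtain ⟨rlo, rhi, clo, chi, hr, hr', hc, hc', hP⟩ := hPC
  obtain ⟨lo, hi, lo', hi', hl, hl', hm, hm', hC⟩ := hCA
  obtain ⟨hlo, hhi⟩ := strictMono_of_intervals hl hl'
  obtain ⟨hlo', hhi'⟩ := strictMono_of_intervals hm hm'
  refine ⟨lo ∘ rlo, hi ∘ rhi, lo' ∘ clo, hi' ∘ chi, fun a => (hlo.monotone (hr a)).trans (hl _),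
    fun a b hab => hl' _ _ (hr' a b hab), fun b => (hlo'.monotone (hc b)).trans (hm _),
    fun a b hab => hm' _ _ (hc' a b hab), fun a b hab => ?_⟩
  obtain ⟨u, v, hu, hu', hv, hv', huv⟩ := hP a b hab
  obtain ⟨i, j, hi₁, hi₂, hj₁, hj₂, hij⟩ := hC u v huv
  exact ⟨i, j, (hlo.monotone hu).trans hi₁, hi₂.trans (hhi.monotone hu'),
    (hlo'.monotone hv).trans hj₁, hj₂.trans (hhi'.monotone hv'), hij⟩

theorem IntervalMinor.swap {P : Fin k → Fin l → Bool} {A : Fin m → Fin n → Bool}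
    (h : IntervalMinor P A) : IntervalMinor (swap P) (swap A) := by
  obtain ⟨rlo, rhi, clo, chi, hr, hr', hc, hc', hP⟩ := h
  refine ⟨clo, chi, rlo, rhi, hc, hc', hr, hr', fun b a hab => ?_⟩
  obtain ⟨i, j, hi₁, hi₂, hj₁, hj₂, hij⟩ := hP a b hab
  exact ⟨j, i, hj₁, hj₂, hi₁, hi₂, hij⟩

theorem intervalMinor_comp (A : Fin m → Fin n → Bool) {r : Fin k → Fin m} {c : Fin l → Fin n}
    (hr : StrictMono r) (hc : StrictMono c) : IntervalMinor (fun a b => A (r a) (c b)) A :=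
  ⟨r, r, c, c, fun _ => le_rfl, fun _ _ h => hr h, fun _ => le_rfl, fun _ _ h => hc h,
    fun a b h => ⟨r a, c b, le_rfl, le_rfl, le_rfl, le_rfl, h⟩⟩

end IntervalMinor

section Blocks

variable {m n t : ℕ}

def blockEquiv (t n : ℕ) : Fin n × Fin t ≃ Fin (t * n) :=
  finProdFinEquiv.trans (finCongr (Nat.mul_comm n t))

@[simp]
lemma blockEquiv_apply_val (u : Fin n) (i : Fin t) : (blockEquiv t n (u, i) : ℕ) = i + t * u :=
  rfl

lemma blockEquiv_lt_of_fst_lt {u u' : Fin n} (h : u < u') (i i' : Fin t) :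
    blockEquiv t n (u, i) < blockEquiv t n (u', i') := by
  have hu : t * u + t ≤ t * u' := Nat.mul_succ t u ▸ Nat.mul_le_mul_left t h
  rw [Fin.lt_def, blockEquiv_apply_val, blockEquiv_apply_val]
  omega

lemma strictMono_blockEquiv_snd (u : Fin n) : StrictMono fun i : Fin t => blockEquiv t n (u, i) :=
  fun _ _ h => by
    rw [Fin.lt_def, blockEquiv_apply_val, blockEquiv_apply_val]
    exact Nat.add_lt_add_right h _

def block (A : Fin (t * m) → Fin (t * n) → Bool) (u : Fin m) (v : Fin n) : Fin t → Fin t → Bool :=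
  fun i j => A (blockEquiv t m (u, i)) (blockEquiv t n (v, j))

def rowContract (A : Fin (t * n) → Fin m → Bool) : Fin n → Fin m → Bool :=
  fun u j => decide (∃ i, A (blockEquiv t n (u, i)) j = true)

def colContract (A : Fin m → Fin (t * n) → Bool) : Fin m → Fin n → Bool :=
  swap (rowContract (swap A))

theorem intervalMinor_rowContract (ht : 0 < t) (A : Fin (t * n) → Fin m → Bool) :
    IntervalMinor (rowContract A) A := by
  obtain ⟨t, rfl⟩ := Nat.exists_eq_succ_of_ne_zero ht.ne'
  have hmono (u : Fin n) := (strictMono_blockEquiv_snd (t := t + 1) u).monotone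
  refine ⟨fun u => blockEquiv _ n (u, 0), fun u => blockEquiv _ n (u, Fin.last t), id, id,
    fun u => hmono u (Fin.zero_le _), fun _ _ h => blockEquiv_lt_of_fst_lt h _ _,
    fun _ => le_rfl, fun _ _ h => h, fun u j h => ?_⟩
  obtain ⟨i, hi⟩ := of_decide_eq_true h
  exact ⟨_, j, hmono u (Fin.zero_le i), hmono u (Fin.le_last i), le_rfl, le_rfl, hi⟩

theorem intervalMinor_colContract (ht : 0 < t) (A : Fin m → Fin (t * n) → Bool) :
    IntervalMinor (colContract A) A :=
  (intervalMinor_rowContract ht (swap A)).swap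

theorem intervalMinor_block (A : Fin (t * m) → Fin (t * n) → Bool) (u : Fin m) (v : Fin n) :
    IntervalMinor (block A u v) A :=
  intervalMinor_comp A (strictMono_blockEquiv_snd u) (strictMono_blockEquiv_snd v)

end Blocks

open Finset

section Mass

variable {k l m n p q t : ℕ}

lemma mass_eq_sum (B : Fin k → Fin l → Bool) :
    mass B = ∑ i, ∑ j, if B i j = true then 1 else 0 := by
  rw [mass, card_filter, Fintype.sum_prod_type]

lemma mass_eq_sum_card (B : Fin k → Fin l → Bool) : mass B = ∑ i, #{j | B i j = true} := by
  simp only [mass_eq_sum, card_filter]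

lemma mass_eq_sum_mass_block (A : Fin (t * m) → Fin (t * n) → Bool) :
    mass A = ∑ u, ∑ v, mass (block A u v) := by
  simp only [mass_eq_sum, block]
  rw [← (blockEquiv t m).sum_comp]
  simp_rw [← (blockEquiv t n).sum_comp, Fintype.sum_prod_type]
  exact sum_congr rfl fun u _ => sum_comm

lemma mass_comp_eq (B : Fin k → Fin l → Bool) (r : Fin p ↪ Fin k) (c : Fin q ↪ Fin l)
    (h : ∀ i j, B i j = true → i ∈ Set.range r ∧ j ∈ Set.range c) :
    mass (fun a b => B (r a) (c b)) = mass B := by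
  rw [mass, mass, ← card_map (r.prodMap c)]
  congr 1
  ext ⟨i, j⟩
  simp only [Finset.mem_map, mem_filter, mem_univ, true_and, Embedding.prodMap, Prod.exists,
    Embedding.coeFn_mk, Prod.map, Prod.mk.injEq]
  constructor
  · rintro ⟨a, b, hab, rfl, rfl⟩
    exact hab
  · intro hij
    obtain ⟨⟨a, rfl⟩, ⟨b, rfl⟩⟩ := h i j hij
    exact ⟨a, b, hij, rfl, rfl⟩

lemma mass_eq_zero {B : Fin k → Fin l → Bool} (h : ¬ ∃ i j, B i j = true) : mass B = 0 := by
  push Not at h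
  simpa [mass, filter_eq_empty_iff] using h

variable {kk ll : ℕ} (P : Fin kk → Fin ll → Bool)

lemma mass_le_mP (B : Fin n → Fin n → Bool) (hB : ¬ IntervalMinor P B) : mass B ≤ mP n P :=
  le_csSup ⟨n * n, by rintro _ ⟨C, -, rfl⟩; exact (card_filter_le _ _).trans_eq (by simp)⟩
    ⟨B, hB, rfl⟩

lemma mP_le {c : ℕ∞} (h : ∀ A : Fin n → Fin n → Bool, ¬ IntervalMinor P A → (mass A : ℕ∞) ≤ c) :
    (mP n P : ℕ∞) ≤ c := by
  induction c using ENat.recTopCoe with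
  | top => exact le_top
  | coe c => exact_mod_cast csSup_le' (by rintro _ ⟨A, hA, rfl⟩; exact_mod_cast h A hA)

end Mass

section Shape

variable {k l r kk ll : ℕ} {P : Fin kk → Fin ll → Bool}

def nonzeroRows (B : Fin k → Fin l → Bool) : Finset (Fin k) :=
  {i | ∃ j, B i j = true}

def nonzeroCols (B : Fin k → Fin l → Bool) : Finset (Fin l) :=
  nonzeroRows (swap B)

lemma mass_le_mP_of_card_nonzero_le {B : Fin k → Fin l → Bool} (hB : ¬ IntervalMinor P B)
    (hrk : r ≤ k) (hrl : r ≤ l) (hR : #(nonzeroRows B) ≤ r) (hC : #(nonzeroCols B) ≤ r) :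
    mass B ≤ mP r P := by
  obtain ⟨R, hRsup, -, hRcard⟩ :=
    exists_subsuperset_card_eq (subset_univ (nonzeroRows B)) hR (by simpa using hrk)
  obtain ⟨C, hCsup, -, hCcard⟩ :=
    exists_subsuperset_card_eq (subset_univ (nonzeroCols B)) hC (by simpa using hrl)
  let eR := R.orderEmbOfFin hRcard
  let eC := C.orderEmbOfFin hCcard
  have hsupp : ∀ i j, B i j = true → i ∈ Set.range eR ∧ j ∈ Set.range eC := by
    intro i j hij
    rw [range_orderEmbOfFin, range_orderEmbOfFin]
    exact ⟨hRsup (mem_filter.2 ⟨mem_univ i, j, hij⟩), hCsup (mem_filter.2 ⟨mem_univ j, i, hij⟩)⟩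
  rw [← mass_comp_eq B eR.toEmbedding eC.toEmbedding hsupp]
  exact mass_le_mP P _ fun h => hB (h.trans (intervalMinor_comp B eR.strictMono eC.strictMono))

end Shape

section BlockCounts

variable {m n s t kk ll : ℕ} {P : Fin kk → Fin ll → Bool}

theorem card_wide_blocks_le_fP (ht : 0 < t) {A : Fin (t * m) → Fin (t * n) → Bool}
    (hA : ¬ IntervalMinor P A) (v : Fin n) :
    (#{u | s ≤ #(nonzeroCols (block A u v))} : ℕ∞) ≤ fP P t s := by
  set W : Finset (Fin m) := {u | s ≤ #(nonzeroCols (block A u v))}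
  let e := W.orderEmbOfFin rfl
  let C := rowContract fun x j => A x (blockEquiv t n (v, j))
  refine le_sSup ⟨#W, rfl, fun w j => C (e w) j, fun w => ?_, fun h => hA ?_⟩
  · have hw : s ≤ #(nonzeroCols (block A (e w) v)) := (mem_filter.1 (W.orderEmbOfFin_mem rfl w)).2
    convert hw using 3
    simp [C, rowContract, nonzeroCols, nonzeroRows, block]
  · exact h.trans <| (intervalMinor_comp C e.strictMono strictMono_id).trans <|
      (intervalMinor_rowContract ht _).trans <|
        intervalMinor_comp A strictMono_id (strictMono_blockEquiv_snd v)

lemma fP_swap_le_gP (t s : ℕ) : fP (swap P) t s ≤ gP P t s :=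
  sSup_le_sSup fun _ ⟨N, hN, B, hB, hBP⟩ => ⟨N, hN, swap B, hB, fun h => hBP h.swap⟩

theorem card_tall_blocks_le_gP (ht : 0 < t) {A : Fin (t * m) → Fin (t * n) → Bool}
    (hA : ¬ IntervalMinor P A) (u : Fin m) :
    (#{v | s ≤ #(nonzeroRows (block A u v))} : ℕ∞) ≤ gP P t s :=
  (card_wide_blocks_le_fP (P := swap P) (A := swap A) ht (fun h => hA h.swap) u).trans
    (fP_swap_le_gP t s)

theorem card_nonzero_blocks_le_mP (ht : 0 < t) {A : Fin (t * n) → Fin (t * n) → Bool}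
    (hA : ¬ IntervalMinor P A) :
    ∑ u, (#{v | ∃ i j, block A u v i j = true} : ℕ∞) ≤ mP n P := by
  have h := mass_le_mP P _ fun h => hA <|
    h.trans <| (intervalMinor_colContract ht _).trans (intervalMinor_rowContract ht A)
  have hsupp (u v : Fin n) :
      colContract (rowContract A) u v = true ↔ ∃ i j, block A u v i j = true := by
    simp only [colContract, rowContract, block, swap, decide_eq_true_eq]
    exact exists_comm
  rw [mass_eq_sum_card] at h
  simp only [← hsupp]
  exact_mod_cast h

end BlockCounts

section Blowup

variable {n s t kk ll : ℕ} {P : Fin kk → Fin ll → Bool}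

lemma mass_le_of_shape (hst : s ≤ t) {B : Fin t → Fin t → Bool} (hB : ¬ IntervalMinor P B) :
    (mass B : ℕ∞) ≤ mP (s - 1) P * (if ∃ i j, B i j = true then 1 else 0) +
      mP t P * (if s ≤ #(nonzeroCols B) then 1 else 0) +
      mP t P * (if s ≤ #(nonzeroRows B) then 1 else 0) := by
  have hB_le : (mass B : ℕ∞) ≤ mP t P := by exact_mod_cast mass_le_mP P B hB
  by_cases hwide : s ≤ #(nonzeroCols B)
  · rw [if_pos hwide, mul_one]
    exact hB_le.trans (le_add_right (le_add_left le_rfl))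
  by_cases htall : s ≤ #(nonzeroRows B)
  · rw [if_pos htall, mul_one]
    exact hB_le.trans (le_add_left le_rfl)
  by_cases hzero : ∃ i j, B i j = true
  · rw [if_pos hzero, mul_one]
    refine le_add_right (le_add_right ?_)
    exact_mod_cast mass_le_mP_of_card_nonzero_le hB (by omega) (by omega) (by omega) (by omega)
  · simp [mass_eq_zero hzero]

theorem mass_le_of_not_intervalMinor (hs : 0 < s) (hst : s ≤ t)
    {A : Fin (t * n) → Fin (t * n) → Bool} (hA : ¬ IntervalMinor P A) :
    (mass A : ℕ∞) ≤ mP (s - 1) P * mP n P + mP t P * fP P t s * n + mP t P * gP P t s * n := by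
  have ht : 0 < t := hs.trans_le hst
  have hwide_sum : ∑ u, ∑ v, (if s ≤ #(nonzeroCols (block A u v)) then (1 : ℕ∞) else 0) =
      ∑ v, (#{u | s ≤ #(nonzeroCols (block A u v))} : ℕ∞) := by
    rw [sum_comm]
    simp only [sum_boole]
  calc (mass A : ℕ∞) = ∑ u, ∑ v, (mass (block A u v) : ℕ∞) := by
        rw [mass_eq_sum_mass_block]; simp only [Nat.cast_sum]
    _ ≤ ∑ u, ∑ v, ((mP (s - 1) P : ℕ∞) * (if ∃ i j, block A u v i j = true then 1 else 0) +
          mP t P * (if s ≤ #(nonzeroCols (block A u v)) then 1 else 0) +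
          mP t P * (if s ≤ #(nonzeroRows (block A u v)) then 1 else 0)) :=
        sum_le_sum fun u _ => sum_le_sum fun v _ =>
          mass_le_of_shape hst fun h => hA (h.trans (intervalMinor_block A u v))
    _ = (mP (s - 1) P : ℕ∞) * ∑ u, (#{v | ∃ i j, block A u v i j = true} : ℕ∞) +
          mP t P * ∑ v, (#{u | s ≤ #(nonzeroCols (block A u v))} : ℕ∞) +
          mP t P * ∑ u, (#{v | s ≤ #(nonzeroRows (block A u v))} : ℕ∞) := by
        rw [← hwide_sum]
        simp only [sum_add_distrib, ← mul_sum, sum_boole]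
    _ ≤ (mP (s - 1) P : ℕ∞) * mP n P + mP t P * ∑ _v : Fin n, fP P t s +
          mP t P * ∑ _u : Fin n, gP P t s :=
        add_le_add (add_le_add (mul_le_mul_right (card_nonzero_blocks_le_mP ht hA) _)
          (mul_le_mul_right (sum_le_sum fun v _ => card_wide_blocks_le_fP ht hA v) _))
          (mul_le_mul_right (sum_le_sum fun u _ => card_tall_blocks_le_gP ht hA u) _)
    _ = _ := by simp only [sum_const, card_univ, Fintype.card_fin, nsmul_eq_mul]; ring

end Blowup

theorem stmt15_general {kk ll : ℕ} (P : Fin kk → Fin ll → Bool) (n s t : ℕ)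
    (hs : 0 < s) (hst : s ≤ t) :
    (mP (t * n) P : ℕ∞) ≤
      (mP (s - 1) P : ℕ∞) * (mP n P : ℕ∞) +
        (mP t P : ℕ∞) * fP P t s * (n : ℕ∞) +
        (mP t P : ℕ∞) * gP P t s * (n : ℕ∞) :=
  mP_le P fun _ hA => mass_le_of_not_intervalMinor hs hst hA

/-- For every binary matrix `P` and all positive integers
`n, s, t` with `s ≤ t`,
`m(tn,P) ≤ m(s−1,P)·m(n,P) + m(t,P)·f_P(t,s)·n + m(t,P)·g_P(t,s)·n`
as an inequality of extended natural numbers. -/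
theorem stmt15 {kk ll : ℕ} (P : Fin kk → Fin ll → Bool) (n s t : ℕ)
    (hn : 0 < n) (hs : 0 < s) (hst : s ≤ t) :
    (mP (t * n) P : ℕ∞) ≤
      (mP (s - 1) P : ℕ∞) * (mP n P : ℕ∞) +
        (mP t P : ℕ∞) * fP P t s * (n : ℕ∞) +
        (mP t P : ℕ∞) * gP P t s * (n : ℕ∞) :=
  stmt15_general P n s t hs hst
end
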